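/- arXiv:1210.4803 — 5 statements merged into one kernel-verified Lean document; each statement's English description precedes it below -/
import Mathlib

section
/- The map φ_{σ_k} on the free noncommutative unital Z-algebra A_n generated by a_{ij} (1 ≤ i ≠ j ≤ n), defined by φ_{σ_k}(a_{ij}) = a_{ij} for i,j ∉ {k,k+1}; φ_{σ_k}(a_{k+1,i}) = a_{ki} and φ_{σ_k}(a_{i,k+1}) = a_{ik} for i ∉ {k,k+1}; φ_{σ_k}(a_{k,k+1}) = -a_{k+1,k}; φ_{σ_k}(a_{k+1,k}) = -a_{k,k+1}; φ_{σ_k}(a_{ki}) = a_{k+1,i} - a_{k+1,k}a_{ki} and φ_{σ_k}(a_{ik}) = a_{i,k+1} - a_{ik}a_{k,k+1} for i ∉ {k,k+1}, is an algebra automorphism of A_n (i.e., it is invertible). -/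
/-- The generators `a_{ij}`, `1 ≤ i ≠ j ≤ n`, of the algebra `A_n`. -/
abbrev KCHGen (n : ℕ) := {p : Fin n × Fin n // p.1 ≠ p.2}

/-- `A_n`, the free noncommutative unital `ℤ`-algebra on the generators `a_{ij}`. -/
abbrev KCHA (n : ℕ) := FreeAlgebra ℤ (KCHGen n)

/-- The generator `a_{ij}` (by convention `0` if `i = j`). -/
noncomputable def kchGen {n : ℕ} (i j : Fin n) : KCHA n :=
  if h : i ≠ j then FreeAlgebra.ι ℤ (⟨(i, j), h⟩ : KCHGen n) else 0

/-- The values of `φ_{σ_k}` on the generators, where `k` and `k1 = k+1` are the two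
strands involved. -/
noncomputable def kchPhiFun {n : ℕ} (k k1 : Fin n) : KCHGen n → KCHA n := fun p =>
  let i := p.1.1
  let j := p.1.2
  if i = k ∧ j = k1 then -(kchGen k1 k)
  else if i = k1 ∧ j = k then -(kchGen k k1)
  else if i = k then kchGen k1 j - kchGen k1 k * kchGen k j
  else if j = k then kchGen i k1 - kchGen i k * kchGen k k1
  else if i = k1 then kchGen k j
  else if j = k1 then kchGen i k
  else kchGen i j



lemma lift_kchGen {n : ℕ} (f : KCHGen n → KCHA n) (i j : Fin n) :
    FreeAlgebra.lift ℤ f (kchGen i j) = if h : i ≠ j then f ⟨(i,j),h⟩ else 0 := by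
  unfold kchGen; split_ifs <;> simp

lemma comp_inv {n : ℕ} (a b : Fin n) (hab : a ≠ b) :
    (FreeAlgebra.lift ℤ (kchPhiFun b a)).comp (FreeAlgebra.lift ℤ (kchPhiFun a b)) =
      AlgHom.id ℤ (KCHA n) := by
  apply FreeAlgebra.hom_ext
  funext p
  obtain ⟨⟨i, j⟩, hij⟩ := p
  have hg : FreeAlgebra.ι ℤ (⟨(i,j),hij⟩ : KCHGen n) = kchGen i j := by
    unfold kchGen; rw [dif_pos hij]
  simp only [Function.comp_apply, AlgHom.coe_comp, FreeAlgebra.lift_ι_apply,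
    AlgHom.coe_id, id_eq]
  rw [hg]
  show (FreeAlgebra.lift ℤ (kchPhiFun b a)) (kchPhiFun a b ⟨(i,j),hij⟩) = kchGen i j
  have hba := hab.symm
  unfold kchPhiFun
  simp only []
  split_ifs with h1 h2 h3 h4 h5 h6
  · obtain ⟨rfl, rfl⟩ := h1
    simp [lift_kchGen, kchPhiFun, hab, hba]
  · obtain ⟨rfl, rfl⟩ := h2
    simp [lift_kchGen, kchPhiFun, hab, hba]
  · subst h3
    -- now a := i ; hab : i ≠ b
    have hjb : j ≠ b := fun h => h1 ⟨rfl, h⟩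
    simp only [map_sub, map_mul, lift_kchGen]
    simp [kchPhiFun, hab, hba, hij, hij.symm, hjb, hjb.symm]
  · subst h4
    -- now a := j ; hab : j ≠ b
    have hib : i ≠ b := fun h => h2 ⟨h, rfl⟩
    simp only [map_sub, map_mul, lift_kchGen]
    simp [kchPhiFun, hab, hba, hij, hij.symm, hib, hib.symm]
  · subst h5
    -- now b := i ; hab : a ≠ i
    have hja : j ≠ a := h4
    simp [lift_kchGen, kchPhiFun, hab, hba, hij, hij.symm, hja, hja.symm]
  · subst h6
    -- now b := j ; hab : a ≠ j
    have hia : i ≠ a := h3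
    simp [lift_kchGen, kchPhiFun, hab, hba, hij, hij.symm, hia, hia.symm]
  · have hia : i ≠ a := h3
    have hja : j ≠ a := h4
    have hib : i ≠ b := h5
    have hjb : j ≠ b := h6
    simp [lift_kchGen, kchPhiFun, hij, hia, hja, hib, hjb, hia.symm, hja.symm, hib.symm, hjb.symm]

/-- The algebra endomorphism `φ_{σ_k}` of `A_n` (here `k` is `0`-indexed, so that the
braid generator `σ_{k+1}` of the paper acts on the strands `k` and `k+1`). -/
noncomputable def kchPhi {n : ℕ} (k : ℕ) (hk : k + 1 < n) : KCHA n →ₐ[ℤ] KCHA n :=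
  FreeAlgebra.lift ℤ (kchPhiFun (⟨k, by omega⟩ : Fin n) (⟨k + 1, hk⟩ : Fin n))

/-- The map `φ_{σ_k}` is an algebra automorphism of `A_n`: it is invertible. -/
theorem kchPhi_bijective (n k : ℕ) (hk : k + 1 < n) :
    Function.Bijective (kchPhi (n := n) k hk) := by
  set a : Fin n := ⟨k, by omega⟩
  set b : Fin n := ⟨k + 1, hk⟩
  have hab : a ≠ b := by simp [a, b, Fin.ext_iff]
  have h1 := comp_inv a b hab
  have h2 := comp_inv b a hab.symm
  have hl : Function.LeftInverse (FreeAlgebra.lift ℤ (kchPhiFun b a)) (kchPhi k hk) := by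
    intro x
    have := DFunLike.congr_fun h1 x
    simpa [kchPhi] using this
  have hr : Function.RightInverse (FreeAlgebra.lift ℤ (kchPhiFun b a)) (kchPhi k hk) := by
    intro x
    have := DFunLike.congr_fun h2 x
    simpa [kchPhi] using this
  exact ⟨hl.injective, hr.surjective⟩
end

section
/- If (A,∂) is a differential graded algebra over a commutative ring and S(A) is its stabilization, obtained by adjoining two new free generators e_1, e_2 with |e_1| = |e_2| + 1, ∂(e_1) = e_2, ∂(e_2) = 0, then the homology of (S(A),∂) is isomorphic to the homology of (A,∂). -/
/-!
Let `α` be the sign automorphism of `S` (`(-1)^i` in degree `i`); the graded Leibniz rule says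
that `∂` is an `(α, id)`-twisted derivation. Let `π : S → A` be the retraction killing `e₁, e₂`
and `ρ = ι ∘ π`. Freeness gives an `(α, ρ)`-twisted derivation `h` with `h ∘ ι = 0`, `h e₁ = 0`,
`h e₂ = e₁`. A twisted derivation vanishing on `ι(A)`, `e₁`, `e₂` vanishes; applied to
`∂ρ - ρ∂` and to `∂h + h∂ - (id - ρ)` this makes `π` a chain map and `h` a chain homotopy from
`id` to `ιπ`, so `ι` and `π` are inverse homotopy equivalences.
-/

namespace GradedAlgebra

variable {R A S : Type*} [CommRing R] [Ring A] [Algebra R A] [Ring S] [Algebra R S]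
  (𝒜 : ℤ → Submodule R A) [GradedAlgebra 𝒜] (𝒮 : ℤ → Submodule R S) [GradedAlgebra 𝒮]

def signAlgHom : S →ₐ[R] S :=
  (DirectSum.toAlgebra R (fun i => 𝒮 i)
      (fun i => ((i.negOnePow : ℤˣ) : ℤ) • (𝒮 i).subtype)
      (by simp [GradedMonoid.GOne.one])
      (fun {i j} x y => by
        simp only [LinearMap.smul_apply, Submodule.subtype_apply, smul_mul_smul_comm,
          Int.negOnePow_add, Units.val_mul]
        rfl)).comp
    (DirectSum.decomposeAlgEquiv 𝒮).toAlgHom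

variable {𝒜 𝒮}

theorem signAlgHom_of_mem {i : ℤ} {x : S} (hx : x ∈ 𝒮 i) :
    signAlgHom 𝒮 x = ((i.negOnePow : ℤˣ) : ℤ) • x := by
  rw [signAlgHom, AlgHom.comp_apply, AlgEquiv.coe_toAlgHom, DirectSum.decomposeAlgEquiv_apply,
    DirectSum.decompose_of_mem 𝒮 hx]
  exact DirectSum.toAddMonoid_of
    (fun i => (((i.negOnePow : ℤˣ) : ℤ) • (𝒮 i).subtype).toAddMonoidHom) i ⟨x, hx⟩

theorem signAlgHom_comp_signAlgHom : (signAlgHom 𝒮).comp (signAlgHom 𝒮) = AlgHom.id R S := by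
  ext x
  induction x using DirectSum.Decomposition.inductionOn 𝒮 with
  | zero => simp
  | homogeneous x =>
    rw [AlgHom.comp_apply, signAlgHom_of_mem x.2, map_zsmul, signAlgHom_of_mem x.2, smul_smul,
      ← Units.val_mul, Int.units_mul_self, Units.val_one, one_smul, AlgHom.id_apply]
  | add x y hx hy => rw [map_add, map_add, hx, hy]

theorem map_signAlgHom_of_shift (f : A →ₗ[R] S) (n : ℤ)
    (hf : ∀ i x, x ∈ 𝒜 i → f x ∈ 𝒮 (i + n)) (x : A) :
    f (signAlgHom 𝒜 x) = ((n.negOnePow : ℤˣ) : ℤ) • signAlgHom 𝒮 (f x) := by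
  induction x using DirectSum.Decomposition.inductionOn 𝒜 with
  | zero => simp
  | @homogeneous i x =>
    rw [signAlgHom_of_mem x.2, map_zsmul, signAlgHom_of_mem (hf i x x.2), smul_smul,
      ← Units.val_mul, Int.negOnePow_add, mul_left_comm, Int.units_mul_self, mul_one]
  | add x y hx hy => rw [map_add, map_add, hx, hy, map_add, map_add, smul_add]

end GradedAlgebra

open GradedAlgebra

section TwistedDerivation

variable {R S T U : Type*} [CommRing R] [Ring S] [Algebra R S] [Ring T] [Algebra R T]
  [Ring U] [Algebra R U]

def IsTwistedDerivation (φ ψ : S →ₐ[R] T) (δ : S →ₗ[R] T) : Prop :=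
  ∀ x y, δ (x * y) = δ x * ψ y + φ x * δ y

namespace IsTwistedDerivation

variable {φ ψ : S →ₐ[R] T} {δ δ' : S →ₗ[R] T}

theorem add (hδ : IsTwistedDerivation φ ψ δ) (hδ' : IsTwistedDerivation φ ψ δ') :
    IsTwistedDerivation φ ψ (δ + δ') := fun x y => by
  simp only [LinearMap.add_apply, hδ x y, hδ' x y, add_mul, mul_add]
  abel

theorem sub (hδ : IsTwistedDerivation φ ψ δ) (hδ' : IsTwistedDerivation φ ψ δ') :
    IsTwistedDerivation φ ψ (δ - δ') := fun x y => by
  simp only [LinearMap.sub_apply, hδ x y, hδ' x y, sub_mul, mul_sub]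
  abel

theorem comp_algHom (hδ : IsTwistedDerivation φ ψ δ) (f : U →ₐ[R] S) :
    IsTwistedDerivation (φ.comp f) (ψ.comp f) (δ ∘ₗ f.toLinearMap) := fun x y => by
  simp [hδ (f x) (f y)]

theorem algHom_comp (hδ : IsTwistedDerivation φ ψ δ) (f : T →ₐ[R] U) :
    IsTwistedDerivation (f.comp φ) (f.comp ψ) (f.toLinearMap ∘ₗ δ) := fun x y => by
  simp [hδ x y]

end IsTwistedDerivation

theorem isTwistedDerivation_id_sub (ρ : S →ₐ[R] S) :
    IsTwistedDerivation (AlgHom.id R S) ρ (LinearMap.id - ρ.toLinearMap) := fun x y => by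
  simp only [LinearMap.sub_apply, LinearMap.id_apply, AlgHom.toLinearMap_apply, map_mul,
    AlgHom.id_apply, sub_mul, mul_sub]
  abel

theorem IsTwistedDerivation.comp_sub_comp {α ρ : S →ₐ[R] S} {d : S →ₗ[R] S}
    (hd : IsTwistedDerivation α (AlgHom.id R S) d) (hαρ : α.comp ρ = ρ.comp α) :
    IsTwistedDerivation (ρ.comp α) ρ (d ∘ₗ ρ.toLinearMap - ρ.toLinearMap ∘ₗ d) := by
  have hdρ := hd.comp_algHom ρ
  have hρd := hd.algHom_comp ρ
  rw [hαρ, AlgHom.id_comp] at hdρ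
  rw [AlgHom.comp_id] at hρd
  exact hdρ.sub hρd

theorem IsTwistedDerivation.comp_add_comp {α ρ : S →ₐ[R] S} {h : S →ₗ[R] S}
    (hα : α.comp α = AlgHom.id R S) (hh : IsTwistedDerivation α ρ h)
    (hαρ : α.comp ρ = ρ.comp α) :
    IsTwistedDerivation (AlgHom.id R S) (ρ.comp α) (h ∘ₗ α.toLinearMap + α.toLinearMap ∘ₗ h) := by
  have hhα := hh.comp_algHom α
  have hαh := hh.algHom_comp α
  rw [hα] at hhα hαh
  rw [hαρ] at hαh
  exact hhα.add hαh

/-- The graded commutator `d h + h d` of two odd twisted derivations is an even one. -/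
theorem IsTwistedDerivation.anticommutator {α ρ : S →ₐ[R] S} {d h : S →ₗ[R] S}
    (hα : α.comp α = AlgHom.id R S) (hd : IsTwistedDerivation α (AlgHom.id R S) d)
    (hh : IsTwistedDerivation α ρ h) (hdα : ∀ x, d (α x) = -α (d x))
    (hhα : ∀ x, h (α x) = -α (h x)) (hdρ : ∀ x, d (ρ x) = ρ (d x)) :
    IsTwistedDerivation (AlgHom.id R S) ρ (d ∘ₗ h + h ∘ₗ d) := fun x y => by
  have hαα (x : S) : α (α x) = x := DFunLike.congr_fun hα x
  simp only [LinearMap.add_apply, LinearMap.comp_apply, AlgHom.id_apply, hh x y, hd x y,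
    map_add, hd _ (ρ y), hd (α x) (h y), hh (d x) y, hh (α x) (d y), hαα, hdα, hhα, hdρ]
  simp only [neg_mul, mul_add, add_mul]
  abel

end TwistedDerivation

theorem isTwistedDerivation_signAlgHom_of_leibniz {R S : Type*} [CommRing R] [Ring S]
    [Algebra R S] {𝒮 : ℤ → Submodule R S} [GradedAlgebra 𝒮] {d : S →ₗ[R] S}
    (hleib : ∀ (i : ℤ) (x y : S), x ∈ 𝒮 i →
      d (x * y) = d x * y + ((Int.negOnePow i : ℤˣ) : ℤ) • (x * d y)) :
    IsTwistedDerivation (signAlgHom 𝒮) (AlgHom.id R S) d := by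
  intro x y
  induction x using DirectSum.Decomposition.inductionOn 𝒮 with
  | zero => simp
  | @homogeneous i x => rw [hleib i x y x.2, signAlgHom_of_mem x.2, smul_mul_assoc]; rfl
  | add x x' hx hx' => simp only [add_mul, map_add, hx, hx']; abel

namespace LinearMap

variable {R M N : Type*} [CommRing R] [AddCommGroup M] [Module R M] [AddCommGroup N] [Module R N]

abbrev homology (d : M →ₗ[R] M) : Type _ :=
  ker d ⧸ (range d).comap (ker d).subtype

variable {dM : M →ₗ[R] M} {dN : N →ₗ[R] N}

def homologyMap (f : M →ₗ[R] N) (hf : ∀ x, dN (f x) = f (dM x)) :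
    dM.homology →ₗ[R] dN.homology :=
  Submodule.mapQ _ _
    (f.restrict fun x (hx : dM x = 0) => show dN (f x) = 0 by rw [hf, hx, map_zero])
    fun _ ⟨y, hy⟩ => ⟨f y, by rw [hf, hy]; rfl⟩

theorem homologyMap_comp_eq_id {f : M →ₗ[R] N} {g : N →ₗ[R] M} (hf : ∀ x, dN (f x) = f (dM x))
    (hg : ∀ y, dM (g y) = g (dN y)) (h : M →ₗ[R] M)
    (hh : ∀ x, dM (h x) + h (dM x) = x - g (f x)) :
    homologyMap g hg ∘ₗ homologyMap f hf = LinearMap.id := by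
  refine Submodule.linearMap_qext _ (LinearMap.ext fun z => (Submodule.Quotient.eq _).2 ?_)
  refine ⟨-h z, ?_⟩
  have hz := hh z
  rw [z.2, map_zero, add_zero] at hz
  simp [hz]
  rfl

def homologyEquivOfHomotopyEquiv (f : M →ₗ[R] N) (g : N →ₗ[R] M)
    (hf : ∀ x, dN (f x) = f (dM x)) (hg : ∀ y, dM (g y) = g (dN y))
    (hM : M →ₗ[R] M) (hhM : ∀ x, dM (hM x) + hM (dM x) = x - g (f x))
    (hN : N →ₗ[R] N) (hhN : ∀ y, dN (hN y) + hN (dN y) = y - f (g y)) :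
    dM.homology ≃ₗ[R] dN.homology :=
  LinearEquiv.ofLinearMap (homologyMap f hf) (homologyMap g hg)
    (homologyMap_comp_eq_id hg hf hN hhN) (homologyMap_comp_eq_id hf hg hM hhM)

end LinearMap

section FreeAdjoin

variable {R : Type*} [CommRing R] {A S : Type} [Ring A] [Algebra R A] [Ring S] [Algebra R S]
  {𝒜 : ℤ → Submodule R A} [GradedAlgebra 𝒜] {𝒮 : ℤ → Submodule R S} [GradedAlgebra 𝒮]

/-- `S = A⟨e₁, e₂⟩`: the free product of `A` with the free algebra on `e₁, e₂`. -/
def IsFreeAdjoin (ι : A →ₐ[R] S) (e₁ e₂ : S) : Prop :=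
  ∀ (B : Type) [Ring B] [Algebra R B], ∀ (f : A →ₐ[R] B) (b₁ b₂ : B),
    ∃! g : S →ₐ[R] B, g.comp ι = f ∧ g e₁ = b₁ ∧ g e₂ = b₂

namespace IsFreeAdjoin

variable {ι : A →ₐ[R] S} {e₁ e₂ : S}

theorem algHom_ext (hfree : IsFreeAdjoin ι e₁ e₂) {B : Type} [Ring B] [Algebra R B]
    {g₁ g₂ : S →ₐ[R] B} (hι : g₁.comp ι = g₂.comp ι) (h₁ : g₁ e₁ = g₂ e₁)
    (h₂ : g₁ e₂ = g₂ e₂) : g₁ = g₂ :=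
  (hfree B (g₂.comp ι) (g₂ e₁) (g₂ e₂)).unique ⟨hι, h₁, h₂⟩ ⟨rfl, rfl, rfl⟩

theorem induction (hfree : IsFreeAdjoin ι e₁ e₂) {p : S → Prop} (hι : ∀ a, p (ι a))
    (h₁ : p e₁) (h₂ : p e₂) (add : ∀ x y, p x → p y → p (x + y))
    (mul : ∀ x y, p x → p y → p (x * y)) (x : S) : p x := by
  let P : Subalgebra R S :=
    { carrier := {x | p x}
      mul_mem' := mul _ _
      add_mem' := add _ _
      algebraMap_mem' := fun r => ι.commutes r ▸ hι _ }
  obtain ⟨q, ⟨hqι, hq₁, hq₂⟩, -⟩ := hfree P (ι.codRestrict P hι) ⟨e₁, h₁⟩ ⟨e₂, h₂⟩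
  have hq : P.val.comp q = AlgHom.id R S :=
    hfree.algHom_ext (by rw [AlgHom.comp_assoc, hqι]; rfl) (by simp [hq₁]) (by simp [hq₂])
  have hqx : (q x : S) = x := DFunLike.congr_fun hq x
  exact hqx ▸ (q x).2

theorem eq_zero_of_isTwistedDerivation (hfree : IsFreeAdjoin ι e₁ e₂) {T : Type*} [Ring T]
    [Algebra R T] {φ ψ : S →ₐ[R] T} {δ : S →ₗ[R] T} (hδ : IsTwistedDerivation φ ψ δ)
    (hι : ∀ a, δ (ι a) = 0) (h₁ : δ e₁ = 0) (h₂ : δ e₂ = 0) : δ = 0 :=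
  LinearMap.ext <| hfree.induction (p := fun x => δ x = 0) hι h₁ h₂
    (fun x y hx hy => by rw [map_add, hx, hy, add_zero])
    (fun x y hx hy => by rw [hδ, hx, hy, zero_mul, mul_zero, add_zero])

/-- A `(φ, ψ)`-derivation `δ` amounts to the algebra map `x ↦ !![φ x, δ x; 0, ψ x]`. -/
theorem exists_isTwistedDerivation (hfree : IsFreeAdjoin ι e₁ e₂) {T : Type} [Ring T]
    [Algebra R T] (φ ψ : S →ₐ[R] T) (t₁ t₂ : T) :
    ∃ δ : S →ₗ[R] T, IsTwistedDerivation φ ψ δ ∧ (∀ a, δ (ι a) = 0) ∧ δ e₁ = t₁ ∧ δ e₂ = t₂ := by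
  let D : S →ₐ[R] Matrix (Fin 2) (Fin 2) T :=
    (Matrix.diagonalAlgHom R).comp (AlgHom.pi ![φ, ψ])
  obtain ⟨g, ⟨hgι, hg₁, hg₂⟩, -⟩ :=
    hfree _ (D.comp ι) !![φ e₁, t₁; 0, ψ e₁] !![φ e₂, t₂; 0, ψ e₂]
  have hg : ∀ x, ∃ t, g x = !![φ x, t; 0, ψ x] := by
    refine hfree.induction (fun a => ⟨0, ?_⟩) ⟨t₁, hg₁⟩ ⟨t₂, hg₂⟩ ?_ ?_
    · rw [← AlgHom.comp_apply, hgι]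
      simp [D, Matrix.diagonal_fin_two]
    · rintro x y ⟨s, hs⟩ ⟨t, ht⟩
      exact ⟨s + t, by rw [map_add, hs, ht]; ext i j; fin_cases i <;> fin_cases j <;> simp⟩
    · rintro x y ⟨s, hs⟩ ⟨t, ht⟩
      exact ⟨φ x * t + s * ψ y, by rw [map_mul, hs, ht, Matrix.mul_fin_two]; simp⟩
  refine ⟨Matrix.entryLinearMap R T 0 1 ∘ₗ g.toLinearMap, fun x y => ?_, fun a => ?_, ?_, ?_⟩
  · obtain ⟨s, hs⟩ := hg x
    obtain ⟨t, ht⟩ := hg y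
    simp [hs, ht, add_comm]
  · rw [LinearMap.comp_apply, AlgHom.toLinearMap_apply, ← AlgHom.comp_apply, hgι]
    simp [D]
  · simp [hg₁]
  · simp [hg₂]

theorem exists_retraction_homotopy (hfree : IsFreeAdjoin ι e₁ e₂) {dA : A →ₗ[R] A}
    {dS : S →ₗ[R] S} (hdSdeg : ∀ (i : ℤ) (x : S), x ∈ 𝒮 i → dS x ∈ 𝒮 (i - 1))
    (hdSleib : ∀ (i : ℤ) (x y : S), x ∈ 𝒮 i →
      dS (x * y) = dS x * y + ((Int.negOnePow i : ℤˣ) : ℤ) • (x * dS y))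
    (hιd : ∀ x, dS (ι x) = ι (dA x)) (hιdeg : ∀ (i : ℤ) (x : A), x ∈ 𝒜 i → ι x ∈ 𝒮 i)
    {k : ℤ} (he₁ : e₁ ∈ 𝒮 (k + 1)) (he₂ : e₂ ∈ 𝒮 k) (hde₁ : dS e₁ = e₂) (hde₂ : dS e₂ = 0) :
    ∃ (π : S →ₐ[R] A) (h : S →ₗ[R] S), (∀ a, π (ι a) = a) ∧ (∀ x, dA (π x) = π (dS x)) ∧
      ∀ x, dS (h x) + h (dS x) = x - ι (π x) := by
  obtain ⟨π, ⟨hπι, hπe₁, hπe₂⟩, -⟩ := hfree A (AlgHom.id R A) 0 0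
  have hπι' (a : A) : π (ι a) = a := DFunLike.congr_fun hπι a
  set α := signAlgHom 𝒮
  set ρ := ι.comp π
  have hd : IsTwistedDerivation α (AlgHom.id R S) dS :=
    isTwistedDerivation_signAlgHom_of_leibniz hdSleib
  have hdα (x : S) : dS (α x) = -α (dS x) := by
    simpa using map_signAlgHom_of_shift dS (-1) hdSdeg x
  have hια (a : A) : α (ι a) = ι (signAlgHom 𝒜 a) := by
    simpa using (map_signAlgHom_of_shift ι.toLinearMap 0 (by simpa using hιdeg) a).symm
  have hαe₁ : α e₁ = -((k.negOnePow : ℤˣ) : ℤ) • e₁ := by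
    rw [signAlgHom_of_mem he₁, Int.negOnePow_succ, Units.val_neg, neg_smul]
  have hαe₂ : α e₂ = ((k.negOnePow : ℤˣ) : ℤ) • e₂ := signAlgHom_of_mem he₂
  have hαα : α.comp α = AlgHom.id R S := signAlgHom_comp_signAlgHom
  have hαρ : α.comp ρ = ρ.comp α :=
    hfree.algHom_ext (AlgHom.ext fun a => by simp [ρ, hπι', hια])
      (by simp [ρ, hπe₁, hαe₁]) (by simp [ρ, hπe₂, hαe₂])
  obtain ⟨h, hh, hhι, hhe₁, hhe₂⟩ := hfree.exists_isTwistedDerivation α ρ 0 e₁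
  have hhα (x : S) : h (α x) = -α (h x) := by
    have := hfree.eq_zero_of_isTwistedDerivation (hh.comp_add_comp hαα hαρ)
      (by simp [hια, hhι]) (by simp [hαe₁, hhe₁, -zsmul_eq_mul])
      (by simp [hαe₂, hhe₂, hαe₁, -zsmul_eq_mul])
    exact eq_neg_of_add_eq_zero_left (LinearMap.congr_fun this x)
  have hdρ (x : S) : dS (ρ x) = ρ (dS x) := by
    have := hfree.eq_zero_of_isTwistedDerivation (hd.comp_sub_comp hαρ)
      (by simp [ρ, hπι', hιd]) (by simp [ρ, hπe₁, hde₁, hπe₂]) (by simp [ρ, hπe₂, hde₂])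
    exact sub_eq_zero.1 (LinearMap.congr_fun this x)
  have homotopy := hfree.eq_zero_of_isTwistedDerivation
    ((hd.anticommutator hαα hh hdα hhα hdρ).sub (isTwistedDerivation_id_sub ρ))
    (by simp [ρ, hπι', hιd, hhι]) (by simp [ρ, hπe₁, hde₁, hhe₁, hhe₂])
    (by simp [ρ, hπe₂, hde₁, hde₂, hhe₂])
  refine ⟨π, h, hπι', fun x => ?_, fun x => sub_eq_zero.1 (LinearMap.congr_fun homotopy x)⟩
  simpa [ρ, hιd, hπι'] using congrArg π (hdρ x)

end IsFreeAdjoin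

end FreeAdjoin

theorem homology_stabilization_general
    (R : Type) [CommRing R]
    -- the DGA `(A, dA)`
    (A : Type) [Ring A] [Algebra R A]
    (𝒜 : ℤ → Submodule R A) [GradedAlgebra 𝒜]
    (dA : A →ₗ[R] A)
    -- the DGA `(S, dS)`
    (S : Type) [Ring S] [Algebra R S]
    (𝒮 : ℤ → Submodule R S) [GradedAlgebra 𝒮]
    (dS : S →ₗ[R] S)
    (hdSdeg : ∀ (i : ℤ) (x : S), x ∈ 𝒮 i → dS x ∈ 𝒮 (i - 1))
    (hdSleib : ∀ (i : ℤ) (x y : S), x ∈ 𝒮 i →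
      dS (x * y) = dS x * y + ((Int.negOnePow i : ℤˣ) : ℤ) • (x * dS y))
    -- `S` is the stabilization of `A`:
    (ι : A →ₐ[R] S)
    (hιd : ∀ x, dS (ι x) = ι (dA x))
    (hιdeg : ∀ (i : ℤ) (x : A), x ∈ 𝒜 i → ι x ∈ 𝒮 i)
    (e₁ e₂ : S) (k : ℤ) (he₁ : e₁ ∈ 𝒮 (k + 1)) (he₂ : e₂ ∈ 𝒮 k)
    (hde₁ : dS e₁ = e₂) (hde₂ : dS e₂ = 0)
    (hfree : ∀ (B : Type) [Ring B] [Algebra R B], ∀ (f : A →ₐ[R] B) (b₁ b₂ : B),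
      ∃! g : S →ₐ[R] B, g.comp ι = f ∧ g e₁ = b₁ ∧ g e₂ = b₂) :
    -- conclusion: `H(S, dS) ≅ H(A, dA)`
    Nonempty
      ((LinearMap.ker dS ⧸
          (LinearMap.range dS).comap (LinearMap.ker dS).subtype) ≃ₗ[R]
        (LinearMap.ker dA ⧸
          (LinearMap.range dA).comap (LinearMap.ker dA).subtype)) := by
  obtain ⟨π, h, hπι, hπd, hh⟩ := IsFreeAdjoin.exists_retraction_homotopy (𝒜 := 𝒜) hfree
    hdSdeg hdSleib hιd hιdeg he₁ he₂ hde₁ hde₂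
  exact ⟨LinearMap.homologyEquivOfHomotopyEquiv π.toLinearMap ι.toLinearMap hπd hιd h hh 0
    (by simp [hπι])⟩

/-- If `(A,∂_A)` is a differential graded algebra over a commutative ring `R` and
`(S,∂_S)` is its stabilization — obtained by adjoining two new free generators
`e₁, e₂` with `|e₁| = |e₂| + 1`, `∂e₁ = e₂`, `∂e₂ = 0` (freeness expressed by the
universal property of `S = A⟨e₁,e₂⟩`) — then the homology of `(S,∂_S)` is isomorphic
to the homology of `(A,∂_A)`. -/
theorem homology_stabilization
    (R : Type) [CommRing R]
    -- the DGA `(A, dA)`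
    (A : Type) [Ring A] [Algebra R A]
    (𝒜 : ℤ → Submodule R A) [GradedAlgebra 𝒜]
    (dA : A →ₗ[R] A)
    (hdA2 : ∀ x, dA (dA x) = 0)
    (hdAdeg : ∀ (i : ℤ) (x : A), x ∈ 𝒜 i → dA x ∈ 𝒜 (i - 1))
    (hdAleib : ∀ (i : ℤ) (x y : A), x ∈ 𝒜 i →
      dA (x * y) = dA x * y + ((Int.negOnePow i : ℤˣ) : ℤ) • (x * dA y))
    -- the DGA `(S, dS)`
    (S : Type) [Ring S] [Algebra R S]
    (𝒮 : ℤ → Submodule R S) [GradedAlgebra 𝒮]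
    (dS : S →ₗ[R] S)
    (hdS2 : ∀ x, dS (dS x) = 0)
    (hdSdeg : ∀ (i : ℤ) (x : S), x ∈ 𝒮 i → dS x ∈ 𝒮 (i - 1))
    (hdSleib : ∀ (i : ℤ) (x y : S), x ∈ 𝒮 i →
      dS (x * y) = dS x * y + ((Int.negOnePow i : ℤˣ) : ℤ) • (x * dS y))
    -- `S` is the stabilization of `A`:
    (ι : A →ₐ[R] S)
    (hιd : ∀ x, dS (ι x) = ι (dA x))
    (hιdeg : ∀ (i : ℤ) (x : A), x ∈ 𝒜 i → ι x ∈ 𝒮 i)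
    (e₁ e₂ : S) (k : ℤ) (he₁ : e₁ ∈ 𝒮 (k + 1)) (he₂ : e₂ ∈ 𝒮 k)
    (hde₁ : dS e₁ = e₂) (hde₂ : dS e₂ = 0)
    (hfree : ∀ (B : Type) [Ring B] [Algebra R B], ∀ (f : A →ₐ[R] B) (b₁ b₂ : B),
      ∃! g : S →ₐ[R] B, g.comp ι = f ∧ g e₁ = b₁ ∧ g e₂ = b₂) :
    -- conclusion: `H(S, dS) ≅ H(A, dA)`
    Nonempty
      ((LinearMap.ker dS ⧸
          (LinearMap.range dS).comap (LinearMap.ker dS).subtype) ≃ₗ[R]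
        (LinearMap.ker dA ⧸
          (LinearMap.range dA).comap (LinearMap.ker dA).subtype)) :=
  homology_stabilization_general R A 𝒜 dA S 𝒮 dS hdSdeg hdSleib ι hιd hιdeg e₁ e₂ k he₁ he₂ hde₁
    hde₂ hfree
end

section
/- For the braid B = (σ_1 ⋯ σ_{n-1})^n ∈ B_n (a full twist), the induced automorphism φ_B of A_n is the identity map. Consequently the representation φ : B_n → Aut(A_n) is not faithful for n ≥ 2. -/
/-- The endomorphism `φ_{σ_k}` of `A_n`, extended to all `k : ℕ` by the identity map. -/
noncomputable def kchPhi' (n k : ℕ) : KCHA n →ₐ[ℤ] KCHA n :=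
  if h : k + 1 < n then kchPhi k h else AlgHom.id ℤ (KCHA n)

/-- `φ_B` for the braid `B = σ_1 ⋯ σ_{n-1} ∈ B_n` (composition of the `φ_{σ_k}`,
using the monoid structure on algebra endomorphisms given by composition). -/
noncomputable def kchPhiCoxeter (n : ℕ) : KCHA n →ₐ[ℤ] KCHA n :=
  ((List.range (n - 1)).map (kchPhi' n)).prod

/-! ### Auxiliary machinery -/

/-- ℕ-indexed generator: `a_{ij}` if both indices are in range, `0` otherwise. -/
noncomputable def kA (n : ℕ) (i j : ℕ) : KCHA n :=
  if h : i < n ∧ j < n then kchGen (⟨i, h.1⟩ : Fin n) (⟨j, h.2⟩ : Fin n) else 0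

lemma kA_eq {n i j : ℕ} (hi : i < n) (hj : j < n) :
    kA n i j = kchGen (⟨i, hi⟩ : Fin n) (⟨j, hj⟩ : Fin n) := dif_pos ⟨hi, hj⟩

lemma kA_eq_ι {n i j : ℕ} (hi : i < n) (hj : j < n) (hij : i ≠ j) :
    kA n i j = FreeAlgebra.ι ℤ (⟨(⟨i, hi⟩, ⟨j, hj⟩), by simp [Fin.ext_iff, hij]⟩ : KCHGen n) := by
  rw [kA_eq hi hj, kchGen, dif_pos (by simp [Fin.ext_iff, hij])]

/-- `φ_{σ_k}` applied to an in-range generator, stated over ℕ. -/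
lemma kchPhi_apply_kA {n : ℕ} (k : ℕ) (hk : k + 1 < n) {i j : ℕ}
    (hi : i < n) (hj : j < n) (hij : i ≠ j) :
    kchPhi k hk (kA n i j) =
      if i = k ∧ j = k + 1 then -(kA n (k+1) k)
      else if i = k + 1 ∧ j = k then -(kA n k (k+1))
      else if i = k then kA n (k+1) j - kA n (k+1) k * kA n k j
      else if j = k then kA n i (k+1) - kA n i k * kA n k (k+1)
      else if i = k + 1 then kA n k j
      else if j = k + 1 then kA n i k
      else kA n i j := by
  have hk' : k < n := by omega
  rw [kA_eq_ι hi hj hij, kchPhi, FreeAlgebra.lift_ι_apply]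
  simp only [kchPhiFun, Fin.mk.injEq]
  split_ifs <;>
    simp_all [kA_eq, kchGen, Fin.ext_iff]

/-- Closed form for the suffix compositions `φ_{σ_k} ∘ ⋯ ∘ φ_{σ_{n-2}}` on generators. -/
noncomputable def kG (n k i j : ℕ) : KCHA n :=
  if i < k then
    (if j < k then kA n i j
     else if j = n - 1 then kA n i k
     else kA n i (j+1) - kA n i k * kA n k (j+1))
  else if i = n - 1 then
    (if j < k then kA n k j else -(kA n k (j+1)))
  else
    (if j < k then kA n (i+1) j - kA n (i+1) k * kA n k j
     else if j = n - 1 then -(kA n (i+1) k)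
     else kA n (i+1) (j+1))

/-- The algebra endomorphism with generator values `kG n k`. -/
noncomputable def kGHom (n k : ℕ) : KCHA n →ₐ[ℤ] KCHA n :=
  FreeAlgebra.lift ℤ (fun p => kG n k p.1.1.1 p.1.2.1)

lemma kGHom_apply_kA {n k i j : ℕ} (hi : i < n) (hj : j < n) (hij : i ≠ j) :
    kGHom n k (kA n i j) = kG n k i j := by
  rw [kA_eq_ι hi hj hij, kGHom, FreeAlgebra.lift_ι_apply]

lemma kGHom_top (n : ℕ) (hn : 1 ≤ n) : kGHom n (n - 1) = 1 := by
  apply FreeAlgebra.hom_ext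
  funext p
  obtain ⟨⟨⟨i, hi⟩, ⟨j, hj⟩⟩, hij⟩ := p
  have hij' : i ≠ j := by simpa [Fin.ext_iff] using hij
  show kGHom n (n-1) (FreeAlgebra.ι ℤ _) = FreeAlgebra.ι ℤ _
  rw [← kA_eq_ι hi hj hij', kGHom_apply_kA hi hj hij', kG]
  split_ifs <;> first | rfl | omega | (subst_vars; rfl)

section Aux

variable {n k : ℕ}

lemma phi_kk1 (hk : k + 1 < n) :
    kchPhi k hk (kA n k (k+1)) = -(kA n (k+1) k) := by
  rw [kchPhi_apply_kA k hk (by omega) hk (by omega), if_pos ⟨rfl, rfl⟩]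

lemma phi_k1k (hk : k + 1 < n) :
    kchPhi k hk (kA n (k+1) k) = -(kA n k (k+1)) := by
  rw [kchPhi_apply_kA k hk hk (by omega) (by omega), if_neg (by omega), if_pos ⟨rfl, rfl⟩]

lemma phi_k_j (hk : k + 1 < n) {j : ℕ} (hj : j < n) (h1 : j ≠ k) (h2 : j ≠ k+1) :
    kchPhi k hk (kA n k j) = kA n (k+1) j - kA n (k+1) k * kA n k j := by
  rw [kchPhi_apply_kA k hk (by omega) hj (by omega), if_neg (by omega), if_neg (by omega),
    if_pos rfl]

lemma phi_i_k (hk : k + 1 < n) {i : ℕ} (hi : i < n) (h1 : i ≠ k) (h2 : i ≠ k+1) :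
    kchPhi k hk (kA n i k) = kA n i (k+1) - kA n i k * kA n k (k+1) := by
  rw [kchPhi_apply_kA k hk hi (by omega) (by omega), if_neg (by omega), if_neg (by omega),
    if_neg (by omega), if_pos rfl]

lemma phi_k1_j (hk : k + 1 < n) {j : ℕ} (hj : j < n) (h1 : j ≠ k) (h2 : j ≠ k+1) :
    kchPhi k hk (kA n (k+1) j) = kA n k j := by
  rw [kchPhi_apply_kA k hk hk hj (by omega), if_neg (by omega), if_neg (by omega),
    if_neg (by omega), if_neg (by omega), if_pos rfl]

lemma phi_i_k1 (hk : k + 1 < n) {i : ℕ} (hi : i < n) (h1 : i ≠ k) (h2 : i ≠ k+1) :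
    kchPhi k hk (kA n i (k+1)) = kA n i k := by
  rw [kchPhi_apply_kA k hk hi hk (by omega), if_neg (by omega), if_neg (by omega),
    if_neg (by omega), if_neg (by omega), if_neg (by omega), if_pos rfl]

lemma phi_fix (hk : k + 1 < n) {i j : ℕ} (hi : i < n) (hj : j < n) (hij : i ≠ j)
    (h1 : i ≠ k) (h2 : i ≠ k+1) (h3 : j ≠ k) (h4 : j ≠ k+1) :
    kchPhi k hk (kA n i j) = kA n i j := by
  rw [kchPhi_apply_kA k hk hi hj hij, if_neg (by omega), if_neg (by omega),
    if_neg (by omega), if_neg (by omega), if_neg (by omega), if_neg (by omega)]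

end Aux
lemma kGHom_step {n k : ℕ} (hk : k + 1 < n) :
    kGHom n k = kchPhi k hk * kGHom n (k + 1) := by
  apply FreeAlgebra.hom_ext
  funext p
  obtain ⟨⟨⟨i, hi⟩, ⟨j, hj⟩⟩, hij⟩ := p
  have hij' : i ≠ j := by simpa [Fin.ext_iff] using hij
  simp only [Function.comp_apply]
  rw [AlgHom.mul_apply, ← kA_eq_ι hi hj hij', kGHom_apply_kA hi hj hij',
    kGHom_apply_kA hi hj hij']
  by_cases hi1 : i < k + 1
  · by_cases hj1 : j < k + 1
    · -- both indices ≤ k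
      conv_rhs => rw [kG, if_pos hi1, if_pos hj1]
      by_cases hik : i = k
      · subst hik
        have hjk : j < i := by omega
        rw [phi_k_j hk hj (by omega) (by omega)]
        conv_lhs => rw [kG, if_neg (by omega), if_neg (by omega), if_pos hjk]
      · by_cases hjk : j = k
        · subst hjk
          rw [phi_i_k hk hi (by omega) (by omega)]
          conv_lhs => rw [kG, if_pos (by omega), if_neg (by omega), if_neg (by omega)]
        · rw [phi_fix hk hi hj hij' (by omega) (by omega) (by omega) (by omega)]
          conv_lhs => rw [kG, if_pos (by omega), if_pos (by omega)]
    · by_cases hjn : j = n - 1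
      · subst hjn
        conv_rhs => rw [kG, if_pos hi1, if_neg (by omega), if_pos rfl]
        by_cases hik : i = k
        · subst hik
          rw [phi_kk1 hk]
          conv_lhs => rw [kG, if_neg (by omega), if_neg (by omega), if_neg (by omega),
            if_pos rfl]
        · rw [phi_i_k1 hk hi (by omega) (by omega)]
          conv_lhs => rw [kG, if_pos (by omega), if_neg (by omega), if_pos rfl]
      · -- k + 1 ≤ j ≤ n - 2
        have hj2 : j + 1 < n := by omega
        conv_rhs => rw [kG, if_pos hi1, if_neg (by omega), if_neg hjn]
        rw [map_sub, map_mul]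
        by_cases hik : i = k
        · subst hik
          rw [phi_k_j hk hj2 (by omega) (by omega), phi_kk1 hk,
            phi_k1_j hk hj2 (by omega) (by omega)]
          conv_lhs => rw [kG, if_neg (by omega), if_neg (by omega), if_neg (by omega),
            if_neg hjn]
          noncomm_ring
        · rw [phi_fix hk hi hj2 (by omega) (by omega) (by omega) (by omega) (by omega),
            phi_i_k1 hk hi (by omega) (by omega), phi_k1_j hk hj2 (by omega) (by omega)]
          conv_lhs => rw [kG, if_pos (by omega), if_neg (by omega), if_neg hjn]
  · by_cases hin : i = n - 1
    · subst hin
      by_cases hj1 : j < k + 1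
      · conv_rhs => rw [kG, if_neg hi1, if_pos rfl, if_pos hj1]
        by_cases hjk : j = k
        · subst hjk
          rw [phi_k1k hk]
          conv_lhs => rw [kG, if_neg (by omega), if_pos rfl, if_neg (by omega)]
        · rw [phi_k1_j hk hj (by omega) (by omega)]
          conv_lhs => rw [kG, if_neg (by omega), if_pos rfl, if_pos (by omega)]
      · have hj2 : j + 1 < n := by omega
        conv_rhs => rw [kG, if_neg hi1, if_pos rfl, if_neg hj1]
        rw [map_neg, phi_k1_j hk hj2 (by omega) (by omega)]
        conv_lhs => rw [kG, if_neg (by omega), if_pos rfl, if_neg (by omega)]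
    · -- k + 1 ≤ i ≤ n - 2
      have hi2 : i + 1 < n := by omega
      by_cases hj1 : j < k + 1
      · conv_rhs => rw [kG, if_neg hi1, if_neg hin, if_pos hj1]
        rw [map_sub, map_mul]
        by_cases hjk : j = k
        · subst hjk
          rw [phi_i_k hk hi2 (by omega) (by omega), phi_i_k1 hk hi2 (by omega) (by omega),
            phi_k1k hk]
          conv_lhs => rw [kG, if_neg (by omega), if_neg hin, if_neg (by omega),
            if_neg (by omega)]
          noncomm_ring
        · rw [phi_fix hk hi2 hj (by omega) (by omega) (by omega) (by omega) (by omega),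
            phi_i_k1 hk hi2 (by omega) (by omega), phi_k1_j hk hj (by omega) (by omega)]
          conv_lhs => rw [kG, if_neg (by omega), if_neg hin, if_pos (by omega)]
      · by_cases hjn : j = n - 1
        · subst hjn
          conv_rhs => rw [kG, if_neg hi1, if_neg hin, if_neg hj1, if_pos rfl]
          rw [map_neg, phi_i_k1 hk hi2 (by omega) (by omega)]
          conv_lhs => rw [kG, if_neg (by omega), if_neg hin, if_neg (by omega), if_pos rfl]
        · conv_rhs => rw [kG, if_neg hi1, if_neg hin, if_neg hj1, if_neg hjn]
          rw [phi_fix hk hi2 (by omega) (by omega) (by omega) (by omega) (by omega) (by omega)]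
          conv_lhs => rw [kG, if_neg (by omega), if_neg hin, if_neg (by omega), if_neg hjn]
lemma kGHom_suffix (n : ℕ) (hn : 1 ≤ n) :
    ∀ m, m ≤ n - 1 →
      ((List.range m).map (fun t => kchPhi' n (n - 1 - m + t))).prod = kGHom n (n - 1 - m) := by
  intro m
  induction m with
  | zero =>
      intro _
      simpa using (kGHom_top n hn).symm
  | succ m ih =>
      intro hm
      rw [List.range_succ_eq_map, List.map_cons, List.prod_cons, List.map_map]
      have e1 : ((fun t => kchPhi' n (n - 1 - (m + 1) + t)) ∘ Nat.succ)
          = fun t => kchPhi' n (n - 1 - m + t) := by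
        funext t
        simp only [Function.comp_apply]
        congr 1
        omega
      rw [e1, ih (by omega)]
      have hk : (n - 1 - (m + 1)) + 1 < n := by omega
      have e2 : n - 1 - (m + 1) + 0 = n - 1 - (m + 1) := by omega
      have e3 : n - 1 - m = (n - 1 - (m + 1)) + 1 := by omega
      rw [e2, e3, kchPhi', dif_pos hk]
      exact (kGHom_step hk).symm

lemma kchPhiCoxeter_eq_kGHom (n : ℕ) (hn : 1 ≤ n) : kchPhiCoxeter n = kGHom n 0 := by
  have h := kGHom_suffix n hn (n - 1) le_rfl
  rw [Nat.sub_self] at h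
  simpa [kchPhiCoxeter] using h

lemma kGHom_pow_kA (n : ℕ) (hn : 2 ≤ n) :
    ∀ m, m ≤ n → ∀ i j : ℕ, i < n → j < n → i ≠ j →
      ((kGHom n 0) ^ m) (kA n i j) =
        (((if i + m < n then 1 else -1) * (if j + m < n then 1 else -1) : ℤ)) •
          kA n (if i + m < n then i + m else i + m - n)
            (if j + m < n then j + m else j + m - n) := by
  intro m
  induction m with
  | zero =>
      intro _ i j hi hj hij
      simp [hi, hj]
  | succ m ih =>
      intro hm i j hi hj hij
      rw [pow_succ, AlgHom.mul_apply, kGHom_apply_kA hi hj hij]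
      by_cases hin : i = n - 1
      · have hjn : j < n - 1 := by omega
        have hg : kG n 0 i j = -(kA n 0 (j + 1)) := by
          rw [kG, if_neg (by omega), if_pos hin, if_neg (by omega)]
        rw [hg, map_neg, ih (by omega) 0 (j + 1) (by omega) (by omega) (by omega)]
        rw [if_pos (by omega : 0 + m < n), if_pos (by omega : 0 + m < n)]
        rw [if_neg (by omega : ¬ i + (m + 1) < n)]
        have e0 : (0 : ℕ) + m = i + (m + 1) - n := by omega
        have e1 : j + 1 + m = j + (m + 1) := by omega
        rw [e0, e1]
        by_cases hjm : j + (m + 1) < n <;>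
          simp [hjm, show ¬ i + (m + 1) < n by omega]
      · by_cases hjn : j = n - 1
        · have hg : kG n 0 i j = -(kA n (i + 1) 0) := by
            rw [kG, if_neg (by omega), if_neg hin, if_neg (by omega), if_pos hjn]
          rw [hg, map_neg, ih (by omega) (i + 1) 0 (by omega) (by omega) (by omega)]
          rw [if_pos (by omega : (0 : ℕ) + m < n), if_pos (by omega : (0 : ℕ) + m < n)]
          rw [if_neg (by omega : ¬ j + (m + 1) < n)]
          have e0 : (0 : ℕ) + m = j + (m + 1) - n := by omega
          have e1 : i + 1 + m = i + (m + 1) := by omega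
          rw [e0, e1]
          by_cases him : i + (m + 1) < n <;>
            simp [him, show ¬ j + (m + 1) < n by omega]
        · have hg : kG n 0 i j = kA n (i + 1) (j + 1) := by
            rw [kG, if_neg (by omega), if_neg hin, if_neg (by omega), if_neg hjn]
          rw [hg, ih (by omega) (i + 1) (j + 1) (by omega) (by omega) (by omega)]
          have e1 : i + 1 + m = i + (m + 1) := by omega
          have e2 : j + 1 + m = j + (m + 1) := by omega
          rw [e1, e2]

/-- For the full twist `B = (σ_1 ⋯ σ_{n-1})^n ∈ B_n`, the automorphism `φ_B` of `A_n`
is the identity map.  (Consequently, the representation `φ : B_n → Aut(A_n)` is not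
faithful for `n ≥ 2`.) -/
theorem kchPhi_fullTwist_eq_id (n : ℕ) (hn : 2 ≤ n) :
    (kchPhiCoxeter n) ^ n = (1 : KCHA n →ₐ[ℤ] KCHA n) := by
  rw [kchPhiCoxeter_eq_kGHom n (by omega)]
  apply FreeAlgebra.hom_ext
  funext p
  obtain ⟨⟨⟨i, hi⟩, ⟨j, hj⟩⟩, hij⟩ := p
  have hij' : i ≠ j := by simpa [Fin.ext_iff] using hij
  simp only [Function.comp_apply]
  rw [AlgHom.one_apply, ← kA_eq_ι hi hj hij',
    kGHom_pow_kA n hn n le_rfl i j hi hj hij',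
    if_neg (by omega : ¬ i + n < n), if_neg (by omega : ¬ j + n < n)]
  rw [show i + n - n = i from by omega, show j + n - n = j from by omega]
  norm_num
end

section
/- Let R_0 = Z[λ^{±1},μ^{±1}] and let A = R_0[x]/(λx² - x + μ - μ², λx² + λμx + μ - 1) be the cord algebra of the right-handed trefoil. If ε : A → C is a ring homomorphism with ε(λ) = λ_0 and ε(μ) = μ_0, then (λ_0 - 1)(μ_0 - 1)(λ_0 μ_0³ + 1) = 0. -/
open Polynomial

/-- `R₀ = ℤ[λ^{±1}, μ^{±1}]` as the group algebra `ℤ[ℤ²]`. -/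
abbrev R0 : Type := AddMonoidAlgebra ℤ (ℤ × ℤ)

noncomputable def lam : R0 := AddMonoidAlgebra.single (1, 0) 1
noncomputable def mu : R0 := AddMonoidAlgebra.single (0, 1) 1

/-- The cord algebra of the right-handed trefoil:
`R₀[x]/(λx² - x + μ - μ², λx² + λμx + μ - 1)`. -/
noncomputable abbrev trefoilCordAlgebra : Type :=
  Polynomial R0 ⧸ Ideal.span {C lam * X ^ 2 - X + C (mu - mu * mu),
    C lam * X ^ 2 + C (lam * mu) * X + C mu - 1}

/-- If `ε` is a ring homomorphism from the cord algebra of the right-handed trefoil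
to `ℂ` with `ε(λ) = l₀` and `ε(μ) = μ₀`, then `(l₀-1)(μ₀-1)(l₀μ₀³+1) = 0`. -/
theorem trefoil_cordAlgebra_augmentation_poly
    (ε : trefoilCordAlgebra →+* ℂ) (l₀ μ₀ : ℂ)
    (hl : ε (Ideal.Quotient.mk _ (C lam)) = l₀)
    (hm : ε (Ideal.Quotient.mk _ (C mu)) = μ₀) :
    (l₀ - 1) * (μ₀ - 1) * (l₀ * μ₀ ^ 3 + 1) = 0 := by
  set I := Ideal.span {C lam * X ^ 2 - X + C (mu - mu * mu),
    C lam * X ^ 2 + C (lam * mu) * X + C mu - 1}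
  set φ : Polynomial R0 →+* ℂ := ε.comp (Ideal.Quotient.mk I) with hφ
  have hlam : φ (C lam) = l₀ := hl
  have hmu : φ (C mu) = μ₀ := hm
  have h1 : φ (C lam * X ^ 2 - X + C (mu - mu * mu)) = 0 := by
    rw [hφ]
    simp only [RingHom.comp_apply]
    rw [Ideal.Quotient.eq_zero_iff_mem.mpr
      (Ideal.subset_span (by simp)), map_zero]
  have h2 : φ (C lam * X ^ 2 + C (lam * mu) * X + C mu - 1) = 0 := by
    rw [hφ]
    simp only [RingHom.comp_apply]
    rw [Ideal.Quotient.eq_zero_iff_mem.mpr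
      (Ideal.subset_span (by simp)), map_zero]
  simp only [map_add, map_sub, map_mul, map_pow, map_one, hlam, hmu] at h1 h2
  set x₀ : ℂ := φ X with hx₀
  have e2 : (l₀ * μ₀ + 1) * x₀ + μ₀ ^ 2 - 1 = 0 := by linear_combination h2 - h1
  linear_combination (-(l₀ * μ₀ + 1) ^ 2) * h1 +
    (-(l₀ * ((l₀ * μ₀ + 1) * x₀ + μ₀ ^ 2 - 1) - 2 * l₀ * (l₀ * μ₀ + 1) * x₀ +
      (l₀ * μ₀ + 1))) * e2
end

section
/- Let π be a group, m, l ∈ π two commuting elements, and ρ : π → GL_m(C) a representation with ρ(m) = diag(μ_0,1,...,1) and ρ(l) = diag(λ_0,*,...,*) diagonal matrices, where μ_0 ≠ 1. Define ε on the tensor algebra over R_0 = Z[λ^{±1},μ^{±1}] freely generated by symbols [γ] for γ ∈ π by ε(μ) = μ_0, ε(λ) = λ_0, and ε([γ]) = (1-μ_0)·(ρ(γ))_{11}. Then ε descends to a ring homomorphism on the quotient by the relations: [e] = 1-μ; [γl] = [lγ] = λ[γ] and [γm] = [mγ] = μ[γ] for all γ ∈ π; and [γ_1γ_2] - [γ_1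 m γ_2] - [γ_1][γ_2] = 0 for all γ_1, γ_2 ∈ π. -/
/-- The defining relations of the cord algebra (Theorem 4.6): on the tensor algebra
over `R₀` freely generated by symbols `[γ]`, `γ ∈ π`, impose `[e] = 1 - μ`;
`[γl] = [lγ] = λ[γ]`, `[γm] = [mγ] = μ[γ]`; and
`[γ₁γ₂] - [γ₁mγ₂] - [γ₁][γ₂] = 0`. -/
inductive cordRel (π : Type) [Group π] (m l : π) :
    FreeAlgebra R0 π → FreeAlgebra R0 π → Prop
  | ident : cordRel π m l (FreeAlgebra.ι R0 (1 : π)) (1 - algebraMap R0 _ mu)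
  | mul_l (γ : π) : cordRel π m l (FreeAlgebra.ι R0 (γ * l))
      (algebraMap R0 _ lam * FreeAlgebra.ι R0 γ)
  | l_mul (γ : π) : cordRel π m l (FreeAlgebra.ι R0 (l * γ))
      (algebraMap R0 _ lam * FreeAlgebra.ι R0 γ)
  | mul_m (γ : π) : cordRel π m l (FreeAlgebra.ι R0 (γ * m))
      (algebraMap R0 _ mu * FreeAlgebra.ι R0 γ)
  | m_mul (γ : π) : cordRel π m l (FreeAlgebra.ι R0 (m * γ))
      (algebraMap R0 _ mu * FreeAlgebra.ι R0 γ)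
  | skein (γ₁ γ₂ : π) : cordRel π m l (FreeAlgebra.ι R0 (γ₁ * γ₂))
      (FreeAlgebra.ι R0 (γ₁ * m * γ₂) + FreeAlgebra.ι R0 γ₁ * FreeAlgebra.ι R0 γ₂)

/-- The cord algebra of `(π, m, l)`. -/
abbrev CordAlgebra (π : Type) [Group π] (m l : π) : Type :=
  RingQuot (cordRel π m l)

/-!
A ring hom out of the cord algebra is the same as a ring hom `φ` out of `R₀` together with
values `f γ` satisfying the cord relations. Take `φ` to evaluate `λ, μ` at `λ₀, μ₀` (units, being
diagonal entries of invertible diagonal matrices) and `f γ = (1 - μ₀) ρ(γ)₁₁`. The `l`- and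
`m`-relations hold because `ρ(l)`, `ρ(m)` are diagonal. For the skein relation, `ρ(m)` differs from
the identity only in its `(1,1)` entry, so `ρ(γ₁γ₂)₁₁ - ρ(γ₁mγ₂)₁₁ = (1 - μ₀) ρ(γ₁)₁₁ ρ(γ₂)₁₁`.
-/

namespace R0

noncomputable def eval {S : Type*} [CommRing S] (a b : Sˣ) : R0 →+* S :=
  (AddMonoidAlgebra.lift ℤ S (ℤ × ℤ)
    ((Units.coeHom S).comp
      { toFun := fun p => a ^ (Multiplicative.toAdd p).1 * b ^ (Multiplicative.toAdd p).2
        map_one' := by simp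
        map_mul' := fun p q => by
          simp only [toAdd_mul, Prod.fst_add, Prod.snd_add, zpow_add]
          exact mul_mul_mul_comm _ _ _ _ })).toRingHom

variable {S : Type*} [CommRing S] (a b : Sˣ)

@[simp]
theorem eval_lam : eval a b lam = a := by
  simp [eval, lam, AddMonoidAlgebra.lift_single]

@[simp]
theorem eval_mu : eval a b mu = b := by
  simp [eval, mu, AddMonoidAlgebra.lift_single]

end R0

namespace CordAlgebra

variable {π : Type} [Group π] {m l : π} {S : Type*} [CommRing S]

theorem exists_ringHom_of_cordRel (φ : R0 →+* S) (f : π → S)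
    (h_one : f 1 = 1 - φ mu)
    (h_mul_l : ∀ γ, f (γ * l) = φ lam * f γ) (h_l_mul : ∀ γ, f (l * γ) = φ lam * f γ)
    (h_mul_m : ∀ γ, f (γ * m) = φ mu * f γ) (h_m_mul : ∀ γ, f (m * γ) = φ mu * f γ)
    (h_skein : ∀ γ₁ γ₂, f (γ₁ * γ₂) = f (γ₁ * m * γ₂) + f γ₁ * f γ₂) :
    ∃ E : CordAlgebra π m l →+* S,
      (∀ γ, E (RingQuot.mkRingHom (cordRel π m l) (FreeAlgebra.ι R0 γ)) = f γ) ∧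
      ∀ r, E (RingQuot.mkRingHom (cordRel π m l) (algebraMap R0 _ r)) = φ r := by
  let _ : Algebra R0 S := φ.toAlgebra
  let F : FreeAlgebra R0 π →ₐ[R0] S := FreeAlgebra.lift R0 f
  have hF_ι (γ : π) : F (FreeAlgebra.ι R0 γ) = f γ := FreeAlgebra.lift_ι_apply f γ
  have hF_alg (r : R0) : F (algebraMap R0 _ r) = φ r := F.commutes r
  have hF_rel : ∀ ⦃x y⦄, cordRel π m l x y → F.toRingHom x = F.toRingHom y := by
    intro x y hxy
    cases hxy with
    | ident => simp [hF_ι, hF_alg, h_one]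
    | mul_l γ => simp [hF_ι, hF_alg, h_mul_l]
    | l_mul γ => simp [hF_ι, hF_alg, h_l_mul]
    | mul_m γ => simp [hF_ι, hF_alg, h_mul_m]
    | m_mul γ => simp [hF_ι, hF_alg, h_m_mul]
    | skein γ₁ γ₂ => simpa [hF_ι] using h_skein γ₁ γ₂
  refine ⟨RingQuot.lift ⟨F.toRingHom, hF_rel⟩, fun γ => ?_, fun r => ?_⟩
  · rw [RingQuot.lift_mkRingHom_apply]; exact hF_ι γ
  · rw [RingQuot.lift_mkRingHom_apply]; exact hF_alg r

end CordAlgebra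

namespace Matrix

variable {n R : Type*} [Fintype n] [DecidableEq n] [CommRing R]

theorem mul_apply_eq_mul_diagonal_ite_mul_apply_add (A B : Matrix n n R) (p : n) (c : R)
    (i j : n) :
    (A * B) i j = (A * diagonal (fun k => if k = p then c else 1) * B) i j
      + (1 - c) * (A i p * B p j) := by
  rw [← sub_eq_iff_eq_add', mul_apply, mul_apply, ← Finset.sum_sub_distrib,
    Finset.sum_eq_single p]
  · rw [mul_diagonal, if_pos rfl]; ring
  · intro k _ hk
    simp [mul_diagonal, hk]
  · simp

theorem isUnit_of_coe_eq_diagonal {U : GL n R} {d : n → R} (hU : (U : Matrix n n R) = diagonal d)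
    (i : n) : IsUnit (d i) :=
  (isUnit_diagonal.mp (hU ▸ U.isUnit)).apply i

end Matrix

open Matrix

/-- Let `π` be a group, `m, l ∈ π` commuting elements, and `ρ : π → GL_N(ℂ)` a
representation with `ρ(m) = diag(μ₀,1,…,1)` and `ρ(l)` diagonal with `(1,1)` entry
`λ₀`, where `μ₀ ≠ 1`.  Then the assignment `ε(μ) = μ₀`, `ε(λ) = λ₀`,
`ε([γ]) = (1-μ₀)·(ρ(γ))₁₁` descends to a ring homomorphism on the cord algebra. -/
theorem representation_gives_augmentation
    (π : Type) [Group π] (m l : π)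
    (N : ℕ) (hN : 2 ≤ N)
    (ρ : π →* Matrix.GeneralLinearGroup (Fin N) ℂ)
    (μ₀ l₀ : ℂ)
    (hρm : ((ρ m : Matrix (Fin N) (Fin N) ℂ)) =
      Matrix.diagonal (fun i => if i = (⟨0, by omega⟩ : Fin N) then μ₀ else 1))
    (hρl : ∃ dl : Fin N → ℂ, dl ⟨0, by omega⟩ = l₀ ∧
      ((ρ l : Matrix (Fin N) (Fin N) ℂ)) = Matrix.diagonal dl) :
    ∃ E : CordAlgebra π m l →+* ℂ,
      (∀ γ : π, E (RingQuot.mkRingHom (cordRel π m l) (FreeAlgebra.ι R0 γ)) =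
        (1 - μ₀) * ((ρ γ : Matrix (Fin N) (Fin N) ℂ)
          (⟨0, by omega⟩ : Fin N) (⟨0, by omega⟩ : Fin N))) ∧
      E (RingQuot.mkRingHom (cordRel π m l) (algebraMap R0 _ lam)) = l₀ ∧
      E (RingQuot.mkRingHom (cordRel π m l) (algebraMap R0 _ mu)) = μ₀ := by
  set i₀ : Fin N := ⟨0, by omega⟩
  obtain ⟨dl, hdl₀, hρl⟩ := hρl
  obtain ⟨u, hu⟩ : IsUnit μ₀ := by simpa using isUnit_of_coe_eq_diagonal hρm i₀
  obtain ⟨v, hv⟩ : IsUnit l₀ := hdl₀ ▸ isUnit_of_coe_eq_diagonal hρl i₀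
  have hρ_mul (a b : π) : (ρ (a * b) : Matrix (Fin N) (Fin N) ℂ) = ρ a * ρ b := by
    rw [map_mul, Units.val_mul]
  obtain ⟨E, hE_ι, hE_alg⟩ := CordAlgebra.exists_ringHom_of_cordRel (m := m) (l := l)
    (R0.eval v u) (fun γ => (1 - μ₀) * (ρ γ : Matrix (Fin N) (Fin N) ℂ) i₀ i₀)
    (by rw [map_one, Units.val_one, one_apply_eq, R0.eval_mu, hu]; ring)
    (fun γ => by rw [hρ_mul, hρl, mul_diagonal, hdl₀, R0.eval_lam, hv]; ring)
    (fun γ => by rw [hρ_mul, hρl, diagonal_mul, hdl₀, R0.eval_lam, hv]; ring)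
    (fun γ => by rw [hρ_mul, hρm, mul_diagonal, if_pos rfl, R0.eval_mu, hu]; ring)
    (fun γ => by rw [hρ_mul, hρm, diagonal_mul, if_pos rfl, R0.eval_mu, hu]; ring)
    (fun γ₁ γ₂ => by
      rw [hρ_mul, hρ_mul, hρ_mul, hρm, mul_apply_eq_mul_diagonal_ite_mul_apply_add _ _ i₀ μ₀]
      ring)
  exact ⟨E, hE_ι, by simp [hE_alg, hv], by simp [hE_alg, hu]⟩
end
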